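/- Let r ≥ 3 and s = r − 1 (so s + 1 = r). Then b_r is a non-Hausdorff element for the action of H̃_r on {0,1}^ℕ: b_r fixes the point 1^∞ = (1,1,1,…), b_r does not restrict to the identity on any open neighborhood of 1^∞, and every open neighborhood of 1^∞ contains a nonempty open subset on which b_r restricts to the identity. -/

import Mathlib

/-- Prepend the letter `v` to the sequence `x`. -/
def cons (v : Fin 2) (x : ℕ → Fin 2) : ℕ → Fin 2
  | 0 => v
  | n + 1 => x n

/-- Pink's recursive equations for the generators `b₁, …, b_r` of the group `H̃_r`
(strictly pre-periodic case with pre-period `s`): `b₁(v·w) = (1-v)·w`,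
`b_{s+1}(0·w) = 0·b_s(w)`, `b_{s+1}(1·w) = 1·b_r(w)`, and for `2 ≤ i ≤ r` with
`i ≠ s+1`, `b_i(0·w) = 0·b_{i-1}(w)`, `b_i(1·w) = 1·w`. -/
def PinkPreRec (r s : ℕ) (b : ℕ → (ℕ → Fin 2) → (ℕ → Fin 2)) : Prop :=
  (∀ w, b 1 (cons 0 w) = cons 1 w) ∧
  (∀ w, b 1 (cons 1 w) = cons 0 w) ∧
  (∀ w, b (s + 1) (cons 0 w) = cons 0 (b s w)) ∧
  (∀ w, b (s + 1) (cons 1 w) = cons 1 (b r w)) ∧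
  ∀ i, 2 ≤ i → i ≤ r → i ≠ s + 1 →
    (∀ w, b i (cons 0 w) = cons 0 (b (i - 1) w)) ∧ (∀ w, b i (cons 1 w) = cons 1 w)

/-!
The relation `b_r(1·w) = 1·b_r(w)` makes `b_r` self-similar at `1^∞`: it fixes `1^∞`, and
whatever `b_r` does near a point `y` it also does near `1^N y`, which lies in any prescribed
neighbourhood of `1^∞` once `N` is large. Now `b_r` moves `0^∞`, because
`b_r(0^∞) = 0·b_{r-1}(0^∞)` and `b_k(0^∞) = 0^{k-1}·1·0^∞` for `1 ≤ k < r`; and `b_r` is the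
identity on the cylinder `0·1·X`, because `b_r(0·1·w) = 0·b_{r-1}(1·w) = 0·1·w`.
-/

open PiNat

theorem cons_injective (v : Fin 2) : Function.Injective (cons v) := fun _ _ h =>
  funext fun n => congrFun h (n + 1)

theorem cons_apply_zero_tail (x : ℕ → Fin 2) : cons (x 0) (fun n => x (n + 1)) = x := by
  funext n; cases n <;> rfl

theorem const_eq_cons (v : Fin 2) : (fun _ => v) = cons v (fun _ => v) := by
  funext n; cases n <;> rfl

theorem mem_cylinder_cons_succ_iff {v : Fin 2} {y x : ℕ → Fin 2} {n : ℕ} :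
    x ∈ cylinder (cons v y) (n + 1) ↔ ∃ w ∈ cylinder y n, x = cons v w := by
  constructor
  · intro hx
    refine ⟨fun k => x (k + 1), fun i hi => hx (i + 1) (by omega), ?_⟩
    have hx0 : x 0 = v := hx 0 (by omega)
    rw [← hx0]
    exact (cons_apply_zero_tail x).symm
  · rintro ⟨w, hw, rfl⟩ (_ | i) hi
    · rfl
    · exact hw i (by omega)

theorem iterate_cons_mem_cylinder_const (v : Fin 2) (y : ℕ → Fin 2) (N : ℕ) :
    (cons v)^[N] y ∈ cylinder (fun _ => v) N := by
  induction N with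
  | zero => simp
  | succ N ih =>
    rw [Function.iterate_succ_apply', const_eq_cons, mem_cylinder_cons_succ_iff]
    exact ⟨_, ih, rfl⟩

theorem exists_cylinder_subset {W : Set (ℕ → Fin 2)} (hW : IsOpen W) {p : ℕ → Fin 2}
    (hp : p ∈ W) : ∃ N, cylinder p N ⊆ W := by
  obtain ⟨_, ⟨x, N, rfl⟩, hpx, hxW⟩ :=
    (isTopologicalBasis_cylinders fun _ => Fin 2).exists_subset_of_mem_open hp hW
  exact ⟨N, (mem_cylinder_iff_eq.mp hpx).symm ▸ hxW⟩

section SelfSimilar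

variable {v : Fin 2} {f : (ℕ → Fin 2) → (ℕ → Fin 2)}

theorem apply_const_of_cons_comm (hf : ∀ w, f (cons v w) = cons v (f w)) :
    f (fun _ => v) = fun _ => v := by
  have hfix : f (fun _ => v) = cons v (f fun _ => v) := by
    conv_lhs => rw [const_eq_cons]
    exact hf _
  funext n
  induction n with
  | zero => rw [hfix]; rfl
  | succ n ih => rw [hfix, cons, ih]

theorem apply_iterate_cons_of_cons_comm (hf : ∀ w, f (cons v w) = cons v (f w)) (N : ℕ)
    (y : ℕ → Fin 2) :
    f ((cons v)^[N] y) = (cons v)^[N] (f y) := by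
  induction N with
  | zero => rfl
  | succ N ih => rw [Function.iterate_succ_apply', Function.iterate_succ_apply', hf, ih]

theorem eqOn_cylinder_iterate_cons_of_cons_comm (hf : ∀ w, f (cons v w) = cons v (f w))
    {y : ℕ → Fin 2} {n : ℕ} (hy : Set.EqOn f id (cylinder y n)) (N : ℕ) :
    Set.EqOn f id (cylinder ((cons v)^[N] y) (n + N)) := by
  induction N with
  | zero => exact hy
  | succ N ih =>
    rw [Function.iterate_succ_apply']
    rintro _ hx
    obtain ⟨w, hw, rfl⟩ := mem_cylinder_cons_succ_iff.mp hx
    rw [hf, ih hw, id, id]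

end SelfSimilar

namespace PinkPreRec

variable {r s : ℕ} {b : ℕ → (ℕ → Fin 2) → (ℕ → Fin 2)}

theorem apply_const_zero_ne (hb : PinkPreRec r s b) (hsr : s < r) {k : ℕ} (hk : 1 ≤ k)
    (hks : k ≤ s) : b k (fun _ => 0) ≠ fun _ => 0 := by
  induction k, hk using Nat.le_induction with
  | base =>
    rw [const_eq_cons, hb.1]
    exact fun h => absurd (congrFun h 0) (by decide)
  | succ k hk ih =>
    rw [const_eq_cons, (hb.2.2.2.2 (k + 1) (by omega) (by omega) (by omega)).1,
      Nat.add_sub_cancel]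
    exact fun h => ih (by omega) (cons_injective 0 h)

end PinkPreRec

/-- For `r ≥ 3` and `s = r - 1`, the map `b_r` is a non-Hausdorff element for the action
of `H̃_r` on `{0,1}^ℕ`: it fixes the constant sequence `1^∞`, it is not the identity on
any open neighborhood of `1^∞`, and every open neighborhood of `1^∞` contains a nonempty
open subset on which `b_r` is the identity. -/
theorem stmt10 (r : ℕ) (hr : 3 ≤ r)
    (b : ℕ → (ℕ → Fin 2) → (ℕ → Fin 2)) (hb : PinkPreRec r (r - 1) b) :
    b r (fun _ => 1) = (fun _ => 1) ∧
    (∀ W : Set (ℕ → Fin 2), IsOpen W → (fun _ => (1 : Fin 2)) ∈ W →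
      ¬ Set.EqOn (b r) id W) ∧
    (∀ W : Set (ℕ → Fin 2), IsOpen W → (fun _ => (1 : Fin 2)) ∈ W →
      ∃ O : Set (ℕ → Fin 2), IsOpen O ∧ O.Nonempty ∧ O ⊆ W ∧ Set.EqOn (b r) id O) := by
  have hr' : r - 1 + 1 = r := by omega
  have hcons_one : ∀ w, b r (cons 1 w) = cons 1 (b r w) := hr' ▸ hb.2.2.2.1
  have hcons_zero : ∀ w, b r (cons 0 w) = cons 0 (b (r - 1) w) := hr' ▸ hb.2.2.1
  have hpred_one : ∀ w, b (r - 1) (cons 1 w) = cons 1 w :=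
    (hb.2.2.2.2 (r - 1) (by omega) (by omega) (by omega)).2
  have hmoves : b r (fun _ => 0) ≠ fun _ => 0 := by
    rw [const_eq_cons, hcons_zero]
    exact fun h => hb.apply_const_zero_ne (by omega) (by omega) le_rfl (cons_injective 0 h)
  have hfixes : Set.EqOn (b r) id (cylinder (cons 0 (cons 1 fun _ => 0)) 2) := by
    rintro _ hx
    obtain ⟨w, hw, rfl⟩ := mem_cylinder_cons_succ_iff.mp hx
    obtain ⟨u, -, rfl⟩ := mem_cylinder_cons_succ_iff.mp hw
    rw [hcons_zero, hpred_one, id]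
  refine ⟨apply_const_of_cons_comm hcons_one, fun W hW h1W hW_fix => ?_,
    fun W hW h1W => ?_⟩ <;>
    obtain ⟨N, hN⟩ := exists_cylinder_subset hW h1W
  · refine ((cons_injective 1).iterate N).ne hmoves ?_
    rw [← apply_iterate_cons_of_cons_comm hcons_one]
    exact hW_fix (hN (iterate_cons_mem_cylinder_const 1 _ N))
  · refine ⟨_, isOpen_cylinder _ _ _, ⟨_, self_mem_cylinder _ _⟩,
      fun x hx => hN fun i hi => ?_, eqOn_cylinder_iterate_cons_of_cons_comm hcons_one hfixes N⟩
    exact (cylinder_anti _ (Nat.le_add_left N 2) hx i hi).trans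
      (iterate_cons_mem_cylinder_const 1 _ N i hi)
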